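/- Let ψ : [0,∞) → [-1,1] be a C¹ function with ψ(t)² < 1, let r₀ > 0, c ∈ (0,1), and suppose -(√(1-ψ²))'(t) ≥ √(1-ψ(t)²)·(C_κ/S_κ)(t+r₀) - c·(C_κ/S_κ)(t+r₀) for all t ≥ 0, where κ ≤ 0. Then for all t ≥ 0, √(1-ψ(t)²) ≤ (S_κ(r₀)/S_κ(t+r₀))·(√(1-ψ(0)²) - c) + c. -/

import Mathlib

open Set

/-- `S_κ(t)`: `sinh(√(-κ)t)/√(-κ)` for `κ < 0`, and `t` for `κ = 0`. -/
noncomputable def Sk (κ t : ℝ) : ℝ :=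
  if κ < 0 then Real.sinh (Real.sqrt (-κ) * t) / Real.sqrt (-κ) else t

/-- `C_κ = S_κ'`. -/
noncomputable def Ck (κ t : ℝ) : ℝ :=
  if κ < 0 then Real.cosh (Real.sqrt (-κ) * t) else 1

lemma hasDerivAt_Sk (κ t : ℝ) : HasDerivAt (Sk κ) (Ck κ t) t := by
  unfold Sk Ck
  split_ifs with hκ
  · have hsqrt : Real.sqrt (-κ) ≠ 0 := (Real.sqrt_pos.mpr (neg_pos.mpr hκ)).ne'
    have h := (((hasDerivAt_id t).const_mul (Real.sqrt (-κ))).sinh).div_const (Real.sqrt (-κ))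
    simpa [hsqrt] using h
  · exact hasDerivAt_id t

lemma Sk_pos (κ : ℝ) {t : ℝ} (ht : 0 < t) : 0 < Sk κ t := by
  unfold Sk
  split_ifs with hκ
  · have hsqrt : 0 < Real.sqrt (-κ) := Real.sqrt_pos.mpr (neg_pos.mpr hκ)
    exact div_pos (Real.sinh_pos_iff.mpr (mul_pos hsqrt ht)) hsqrt
  · exact ht

lemma DifferentiableAt.sqrt_one_sub_sq {ψ : ℝ → ℝ} {t : ℝ} (hψ : DifferentiableAt ℝ ψ t)
    (hlt : ψ t ^ 2 < 1) : DifferentiableAt ℝ (fun s => Real.sqrt (1 - ψ s ^ 2)) t :=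
  ((hψ.pow 2).const_sub 1).sqrt (sub_ne_zero.mpr hlt.ne')

section Gronwall

variable {S S' f : ℝ → ℝ} {a c : ℝ}

/-- The integrating factor: `f' ≤ -(S'/S)(f - c)` says exactly that `(S (f - c))' ≤ 0`. -/
lemma antitoneOn_mul_sub_of_le_neg_deriv (hS : ∀ t ∈ Ici a, HasDerivAt S (S' t) t)
    (hS_pos : ∀ t ∈ Ici a, 0 < S t) (hf : ∀ t ∈ Ici a, DifferentiableAt ℝ f t)
    (h : ∀ t ∈ Ici a, (f t - c) * (S' t / S t) ≤ -deriv f t) :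
    AntitoneOn (fun t => S t * (f t - c)) (Ici a) := by
  have hderiv : ∀ t ∈ Ici a,
      HasDerivAt (fun t => S t * (f t - c)) (S' t * (f t - c) + S t * deriv f t) t :=
    fun t ht => (hS t ht).mul ((hf t ht).hasDerivAt.sub_const c)
  refine antitoneOn_of_deriv_nonpos (convex_Ici a)
    (fun t ht => (hderiv t ht).continuousAt.continuousWithinAt)
    (fun t ht => (hderiv t (interior_subset ht)).differentiableAt.differentiableWithinAt)
    (fun t ht => ?_)
  have ht : t ∈ Ici a := interior_subset ht
  have hineq := h t ht
  rw [mul_div_assoc', div_le_iff₀ (hS_pos t ht)] at hineq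
  rw [(hderiv t ht).deriv]
  linarith

lemma le_div_mul_sub_add_of_le_neg_deriv (hS : ∀ t ∈ Ici a, HasDerivAt S (S' t) t)
    (hS_pos : ∀ t ∈ Ici a, 0 < S t) (hf : ∀ t ∈ Ici a, DifferentiableAt ℝ f t)
    (h : ∀ t ∈ Ici a, (f t - c) * (S' t / S t) ≤ -deriv f t) {t : ℝ} (ht : a ≤ t) :
    f t ≤ S a / S t * (f a - c) + c := by
  have hmono := antitoneOn_mul_sub_of_le_neg_deriv hS hS_pos hf h self_mem_Ici ht ht
  rw [div_mul_eq_mul_div, ← sub_le_iff_le_add, le_div_iff₀ (hS_pos t ht)]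
  linarith

end Gronwall

theorem gronwall_angle_estimate_general
    (κ r₀ c : ℝ) (hr₀ : 0 < r₀)
    (ψ : ℝ → ℝ) (hψ : ContDiff ℝ 1 ψ)
    (hlt : ∀ t : ℝ, 0 ≤ t → ψ t ^ 2 < 1)
    (hineq : ∀ t : ℝ, 0 ≤ t →
      Real.sqrt (1 - ψ t ^ 2) * (Ck κ (t + r₀) / Sk κ (t + r₀)) -
          c * (Ck κ (t + r₀) / Sk κ (t + r₀)) ≤
        -(deriv (fun s => Real.sqrt (1 - ψ s ^ 2)) t)) :
    ∀ t : ℝ, 0 ≤ t →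
      Real.sqrt (1 - ψ t ^ 2) ≤
        Sk κ r₀ / Sk κ (t + r₀) * (Real.sqrt (1 - ψ 0 ^ 2) - c) + c := by
  intro t ht
  have hS : ∀ s ∈ Ici (0 : ℝ), HasDerivAt (fun s => Sk κ (s + r₀)) (Ck κ (s + r₀)) s :=
    fun s _ => (hasDerivAt_Sk κ (s + r₀)).comp_add_const s r₀
  have hS_pos : ∀ s ∈ Ici (0 : ℝ), 0 < Sk κ (s + r₀) :=
    fun s hs => Sk_pos κ (add_pos_of_nonneg_of_pos hs hr₀)
  have hf : ∀ s ∈ Ici (0 : ℝ), DifferentiableAt ℝ (fun s => Real.sqrt (1 - ψ s ^ 2)) s :=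
    fun s hs => ((hψ.differentiable one_ne_zero) s).sqrt_one_sub_sq (hlt s hs)
  have h := le_div_mul_sub_add_of_le_neg_deriv hS hS_pos hf
    (fun s hs => (sub_mul _ _ _).trans_le (hineq s hs)) ht
  simpa only [zero_add] using h

/-- The Gronwall-type integration step in the finite-topology proof:
if `ψ` is `C¹`, `ψ² < 1`, and
`-(√(1-ψ²))' ≥ √(1-ψ²)(C_κ/S_κ)(t+r₀) - c (C_κ/S_κ)(t+r₀)` for all `t ≥ 0`,
then `√(1-ψ(t)²) ≤ (S_κ(r₀)/S_κ(t+r₀))(√(1-ψ(0)²) - c) + c` for all `t ≥ 0`. -/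
theorem gronwall_angle_estimate
    (κ r₀ c : ℝ) (hκ : κ ≤ 0) (hr₀ : 0 < r₀) (hc : c ∈ Ioo (0:ℝ) 1)
    (ψ : ℝ → ℝ) (hψ : ContDiff ℝ 1 ψ)
    (hrange : ∀ t : ℝ, 0 ≤ t → ψ t ∈ Icc (-1:ℝ) 1)
    (hlt : ∀ t : ℝ, 0 ≤ t → ψ t ^ 2 < 1)
    (hineq : ∀ t : ℝ, 0 ≤ t →
      Real.sqrt (1 - ψ t ^ 2) * (Ck κ (t + r₀) / Sk κ (t + r₀)) -
          c * (Ck κ (t + r₀) / Sk κ (t + r₀)) ≤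
        -(deriv (fun s => Real.sqrt (1 - ψ s ^ 2)) t)) :
    ∀ t : ℝ, 0 ≤ t →
      Real.sqrt (1 - ψ t ^ 2) ≤
        Sk κ r₀ / Sk κ (t + r₀) * (Real.sqrt (1 - ψ 0 ^ 2) - c) + c :=
  gronwall_angle_estimate_general κ r₀ c hr₀ ψ hψ hlt hineq
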